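/- Fix a standard Young tableau T of shape λ (a partition of d of length < n = dim V) and a basis v_1,...,v_n of V. The set { c_λ^T(v_{(T,S)}) : S a semistandard tableau of shape λ with entries in {1,...,n} } is a basis of the Schur module S_λ^T V = c_λ^T(V^{⊗d}). -/

import Mathlib

noncomputable section
namespace SchurApolarity

open scoped TensorProduct

variable (K : Type) [Field K] (V : Type) [AddCommGroup V] [Module K V]

/-- The set of boxes of a Young diagram described by its column lengths `m : Fin N → ℕ`:
the box `⟨j, i⟩` lies in column `j` and row `i`. -/
abbrev Cell (N : ℕ) (m : Fin N → ℕ) : Type := Σ j : Fin N, Fin (m j)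

variable (d : ℕ)

/-- The endomorphism of `V^{⊗ d}` permuting the tensor factors by `π`:
on pure tensors it sends `⊗ᵢ v i` to `⊗ᵢ v (π i)`. -/
def tpermMap (π : Equiv.Perm (Fin d)) : (⨂[K] _x : Fin d, V) →ₗ[K] ⨂[K] _x : Fin d, V :=
  (PiTensorProduct.reindex K (fun _ : Fin d => V) π.symm).toLinearMap

variable {N : ℕ} (m : Fin N → ℕ)

/-- The subgroup (as a finset) of the permutations of `{1,…,d}` which fix the content of
every row of the tableau `T`. -/
def rowPerms (T : Fin d ≃ Cell N m) : Finset (Equiv.Perm (Fin d)) :=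
  haveI : DecidablePred fun σ : Equiv.Perm (Fin d) =>
      ∀ x, ((T (σ x)).2 : ℕ) = ((T x).2 : ℕ) := fun _ => Classical.propDecidable _
  Finset.univ.filter fun σ => ∀ x, ((T (σ x)).2 : ℕ) = ((T x).2 : ℕ)

/-- The subgroup (as a finset) of the permutations of `{1,…,d}` which fix the content of
every column of the tableau `T`. -/
def colPerms (T : Fin d ≃ Cell N m) : Finset (Equiv.Perm (Fin d)) :=
  haveI : DecidablePred fun σ : Equiv.Perm (Fin d) => ∀ x, (T (σ x)).1 = (T x).1 :=
    fun _ => Classical.propDecidable _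
  Finset.univ.filter fun σ => ∀ x, (T (σ x)).1 = (T x).1

/-- The Young symmetrizer `c_λ^T : V^{⊗d} → V^{⊗d}`, sending `v₁ ⊗ ⋯ ⊗ v_d` to
`Σ_{τ ∈ C_λ} Σ_{σ ∈ R_λ} sign(τ) v_{τ(σ(1))} ⊗ ⋯ ⊗ v_{τ(σ(d))}`. -/
def youngSym (T : Fin d ≃ Cell N m) : (⨂[K] _x : Fin d, V) →ₗ[K] ⨂[K] _x : Fin d, V :=
  ∑ τ ∈ colPerms d m T, ∑ σ ∈ rowPerms d m T,
    ((Equiv.Perm.sign τ : ℤ) : K) • tpermMap K V d (τ * σ)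

/-- The column antisymmetrizer `b_λ^T : V^{⊗d} → V^{⊗d}`. -/
def colAntisym (T : Fin d ≃ Cell N m) : (⨂[K] _x : Fin d, V) →ₗ[K] ⨂[K] _x : Fin d, V :=
  ∑ τ ∈ colPerms d m T, ((Equiv.Perm.sign τ : ℤ) : K) • tpermMap K V d τ

/-- `T` is a standard tableau: the entries (given by `T.symm`) strictly increase down the
columns and along the rows. -/
def IsStdTableau (T : Fin d ≃ Cell N m) : Prop :=
  (∀ x y : Cell N m, x.1 = y.1 → (x.2 : ℕ) < (y.2 : ℕ) → T.symm x < T.symm y) ∧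
  (∀ x y : Cell N m, (x.2 : ℕ) = (y.2 : ℕ) → x.1 < y.1 → T.symm x < T.symm y)

/-- A filling `S` of the diagram with entries in `{1,…,n}` is semistandard: the rows are
weakly increasing from left to right and the columns strictly increasing from top to
bottom. -/
def IsSemistdFilling {n : ℕ} (S : Cell N m → Fin n) : Prop :=
  (∀ x y : Cell N m, (x.2 : ℕ) = (y.2 : ℕ) → x.1 ≤ y.1 → S x ≤ S y) ∧
  (∀ x y : Cell N m, x.1 = y.1 → (x.2 : ℕ) < (y.2 : ℕ) → S x < S y)

end SchurApolarity

/-!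
Index the basis tensors `v_{i₁} ⊗ ⋯ ⊗ v_{i_d}` of `V^{⊗d}` by fillings `W` of the diagram, the
entry of the box `T i` giving the factor in position `i`. Transported to boxes, the column and row
groups of `T` become the permutations of boxes preserving columns, resp. rows, and
`c_λ^T (v_W) = Σ_q sign q Σ_p v_{W ∘ q ∘ p}`.

Spanning is straightening: a filling with a repeated entry in some column is killed by the
symmetrizer; otherwise sorting its columns only changes the sign, and if the sorted filling has a
row descent, a Garnir relation rewrites it through fillings of strictly larger column weight
`Σ col(z) W(z)`, which is bounded.

Independence is triangularity: the coefficient of `v_S` in `c_λ^T (v_{S'})` vanishes unless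
`S = S' ∘ q ∘ p`, which forces `S ≤ S'` for the dominance statistic "number of entries `≤ t` in
the first `r` rows". This statistic separates semistandard fillings, and for `S = S'` only `q = 1`
contributes, so the diagonal coefficient is a positive integer.
-/

namespace SchurApolarity

open Equiv Finset
open scoped TensorProduct

section Permutations

variable {α β : Type*}

def fiberPerms (f : α → β) : Subgroup (Perm α) where
  carrier := {g | ∀ z, f (g z) = f z}
  one_mem' _ := rfl
  mul_mem' hg hh z := (hg _).trans (hh z)
  inv_mem' {g} hg z := by simpa using (hg (g⁻¹ z)).symm

theorem mem_fiberPerms {f : α → β} {g : Perm α} : g ∈ fiberPerms f ↔ ∀ z, f (g z) = f z :=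
  Iff.rfl

instance [Fintype α] [DecidableEq β] (f : α → β) : DecidablePred (· ∈ fiberPerms f) :=
  fun _ => Fintype.decidableForallFintype

theorem sum_eq_sum_fiberPerms {γ M : Type*} [Fintype β] [DecidableEq β] [DecidableEq γ]
    [AddCommMonoid M] (T : α ≃ β) (f : β → γ) {s : Finset (Perm α)}
    (hs : ∀ σ, σ ∈ s ↔ ∀ x, f (T (σ x)) = f (T x)) (F : Perm α → M) :
    ∑ σ ∈ s, F σ = ∑ q : fiberPerms f, F (T.symm.permCongr q) := by
  refine sum_bij' (fun σ hσ => ⟨T.permCongr σ, fun z => by simpa using (hs σ).1 hσ (T.symm z)⟩)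
    (fun q _ => T.symm.permCongr q) (fun _ _ => mem_univ _)
    (fun q _ => (hs _).2 fun x => by simpa using q.2 (T x)) (fun σ _ => by ext; simp)
    (fun q _ => by ext; simp) (fun σ _ => by congr; ext; simp)

variable [DecidableEq α]

theorem swap_mem_fiberPerms {f : α → β} {x y : α} (h : f x = f y) :
    swap x y ∈ fiberPerms f := by
  intro z
  rcases eq_or_ne z x with rfl | hx
  · simp [h]
  rcases eq_or_ne z y with rfl | hy
  · simp [h]
  · rw [swap_apply_of_ne_of_ne hx hy]

variable [Fintype α]

def supportedIn (X : Finset α) : Subgroup (Perm α) where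
  carrier := {g | g.support ⊆ X}
  one_mem' := by simp
  mul_mem' hg hh := (Perm.support_mul_le _ _).trans (union_subset hg hh)
  inv_mem' hg := by simpa [Perm.support_inv] using hg

instance (X : Finset α) : DecidablePred (· ∈ supportedIn X) :=
  fun g => inferInstanceAs (Decidable (g.support ⊆ X))

theorem apply_eq_of_mem_supportedIn {X : Finset α} {g : Perm α} (hg : g ∈ supportedIn X)
    {z : α} (hz : z ∉ X) : g z = z :=
  Perm.notMem_support.1 fun h => hz (hg h)

theorem apply_mem_of_mem_supportedIn {X : Finset α} {g : Perm α} (hg : g ∈ supportedIn X)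
    {z : α} (hz : z ∈ X) : g z ∈ X := by
  by_cases h : z ∈ g.support
  · exact hg (Perm.apply_mem_support.2 h)
  · rwa [Perm.notMem_support.1 h]

theorem swap_mem_supportedIn {X : Finset α} {x y : α} (hx : x ∈ X) (hy : y ∈ X) :
    swap x y ∈ supportedIn X := by
  intro z hz
  rw [Perm.mem_support, swap_apply_def] at hz
  split_ifs at hz with h₁ h₂ <;> simp_all

end Permutations

section Signs

variable {K M : Type*} [Field K] [AddCommGroup M] [Module K M]

theorem eq_zero_of_eq_neg [CharZero K] {v : M} (h : v = -v) : v = 0 := by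
  have h2 : (2 : K) • v = 0 := by rw [two_smul]; nth_rewrite 2 [h]; exact add_neg_cancel v
  exact (smul_eq_zero.1 h2).resolve_left two_ne_zero

theorem sign_smul_sign_smul {α : Type*} [Fintype α] [DecidableEq α] (g : Perm α) (v : M) :
    ((Perm.sign g : ℤ) : K) • ((Perm.sign g : ℤ) : K) • v = v := by
  rw [smul_smul, ← Int.cast_mul, ← Units.val_mul, Int.units_mul_self, Units.val_one,
    Int.cast_one, one_smul]

theorem sum_sign_smul_eq_zero_of_mul_right_invariant [CharZero K] {α : Type*} [Fintype α]
    [DecidableEq α] (H : Subgroup (Perm α)) [Fintype H] {w : Perm α} (hw : w ∈ H)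
    (hsign : Perm.sign w = -1)
    (F : Perm α → M) (hF : ∀ g, F (g * w) = F g) :
    ∑ g : H, ((Perm.sign (g : Perm α) : ℤ) : K) • F g = 0 := by
  apply eq_zero_of_eq_neg (K := K)
  conv_lhs => rw [← Equiv.sum_comp (Equiv.mulRight (⟨w, hw⟩ : H))]
  rw [← sum_neg_distrib]
  refine sum_congr rfl fun g _ => ?_
  simp [hF, hsign]

end Signs

theorem linearIndependent_of_triangular {R M ι α : Type*} [Ring R] [NoZeroDivisors R]
    [AddCommGroup M] [Module R M] [PartialOrder α] {v : ι → M} (φ : ι → M →ₗ[R] R) (f : ι → α)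
    (hf : Function.Injective f) (hdiag : ∀ i, φ i (v i) ≠ 0)
    (htri : ∀ i j, φ i (v j) ≠ 0 → f i ≤ f j) : LinearIndependent R v := by
  classical
  rw [linearIndependent_iff']
  intro s g hg i hi
  by_contra hgi
  obtain ⟨i₀, hi₀, hmax⟩ :=
    (s.filter (g · ≠ 0)).exists_maximalFor f ⟨i, mem_filter.2 ⟨hi, hgi⟩⟩
  rw [mem_filter] at hi₀
  have hoff : ∀ j ∈ s, j ≠ i₀ → g j * φ i₀ (v j) = 0 := by
    intro j hj hne
    by_contra h
    obtain ⟨hgj, hφ⟩ := mul_ne_zero_iff.1 h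
    exact hne (hf (le_antisymm (hmax (mem_filter.2 ⟨hj, hgj⟩) (htri _ _ hφ)) (htri _ _ hφ)))
  have h := congrArg (φ i₀) hg
  simp only [map_sum, map_smul, smul_eq_mul, map_zero] at h
  rw [sum_eq_single_of_mem i₀ hi₀.1 hoff] at h
  exact mul_ne_zero hi₀.2 (hdiag i₀) h

theorem sum_mul_lt_sum_perm_mul {α : Type*} [Fintype α] (π : Perm α) {f v : α → ℤ} (b : ℤ)
    (hnonneg : ∀ z, 0 ≤ (f (π z) - f z) * (v z - b)) (hpos : ∀ z, f z < f (π z) → b < v z)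
    (hπ : ∃ z, f (π z) ≠ f z) : ∑ z, f z * v z < ∑ z, f (π z) * v z := by
  have hbal : ∑ z, (f (π z) - f z) = 0 := by rw [sum_sub_distrib, Equiv.sum_comp π f, sub_self]
  obtain ⟨z₀, -, hz₀⟩ := exists_pos_of_sum_zero_of_exists_nonzero _ hbal <| by
    obtain ⟨z, hz⟩ := hπ
    exact ⟨z, mem_univ _, sub_ne_zero.2 hz⟩
  have hgap : 0 < ∑ z, (f (π z) - f z) * (v z - b) :=
    sum_pos' (fun z _ => hnonneg z)
      ⟨z₀, mem_univ _, mul_pos hz₀ (sub_pos.2 (hpos z₀ (sub_pos.1 hz₀)))⟩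
  have hexp : ∑ z, (f (π z) - f z) * (v z - b) =
      (∑ z, f (π z) * v z - ∑ z, f z * v z) - b * ∑ z, (f (π z) - f z) := by
    rw [mul_sum, ← sum_sub_distrib, ← sum_sub_distrib]
    exact sum_congr rfl fun z _ => by ring
  rw [hexp, hbal] at hgap
  linarith

theorem card_inter_eq_min_of_lowerClosed {α β : Type*} [DecidableEq α] [LinearOrder β]
    {s t : Finset α} (ρ : α → β) (hs : ∀ a ∈ s, ∀ b ∈ t, ρ b ≤ ρ a → b ∈ s)
    (ht : ∀ a ∈ t, ∀ b ∈ s, ρ b ≤ ρ a → b ∈ t) : #(s ∩ t) = min #s #t := by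
  have hcmp : s ⊆ t ∨ t ⊆ s := by
    by_contra! h
    obtain ⟨a, has, hat⟩ := not_subset.1 h.1
    obtain ⟨b, hbt, hbs⟩ := not_subset.1 h.2
    rcases le_total (ρ a) (ρ b) with hab | hba
    · exact hat (ht b hbt a has hab)
    · exact hbs (hs a has b hbt hba)
  rcases hcmp with h | h
  · rw [inter_eq_left.2 h, min_eq_left (card_le_card h)]
  · rw [inter_eq_right.2 h, min_eq_right (card_le_card h)]

section Cells

variable {N : ℕ} {m : Fin N → ℕ} {n : ℕ}

abbrev colPermGroup (N : ℕ) (m : Fin N → ℕ) : Subgroup (Perm (Cell N m)) :=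
  fiberPerms (Sigma.fst : Cell N m → Fin N)

abbrev rowPermGroup (N : ℕ) (m : Fin N → ℕ) : Subgroup (Perm (Cell N m)) :=
  fiberPerms fun z : Cell N m => (z.2 : ℕ)

theorem cell_ext {z w : Cell N m} (h₁ : z.1 = w.1) (h₂ : (z.2 : ℕ) = w.2) : z = w :=
  Sigma.ext h₁ ((Fin.heq_ext_iff (congrArg m h₁)).2 h₂)

def ColStrict (W : Cell N m → Fin n) : Prop :=
  ∀ x y : Cell N m, x.1 = y.1 → (x.2 : ℕ) < y.2 → W x < W y

theorem ColStrict.le {W : Cell N m → Fin n} (hW : ColStrict W) {x y : Cell N m}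
    (h₁ : x.1 = y.1) (h₂ : (x.2 : ℕ) ≤ y.2) : W x ≤ W y := by
  rcases h₂.eq_or_lt with h | h
  · rw [cell_ext h₁ h]
  · exact (hW x y h₁ h).le

theorem exists_colPerm_colStrict (W : Cell N m → Fin n)
    (hW : ∀ x y : Cell N m, x.1 = y.1 → W x = W y → x = y) :
    ∃ q ∈ colPermGroup N m, ColStrict (W ∘ q) := by
  refine ⟨sigmaCongrRight fun j => Tuple.sort fun i => W ⟨j, i⟩, fun _ => rfl, ?_⟩
  rintro ⟨j, i⟩ ⟨j', i'⟩ (rfl : j = j') hlt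
  have hinj : Function.Injective ((fun i => W ⟨j, i⟩) ∘ Tuple.sort fun i => W ⟨j, i⟩) :=
    Function.Injective.comp (fun a b hab => by simpa using hW ⟨j, a⟩ ⟨j, b⟩ rfl hab)
      (Tuple.sort _).injective
  exact (Tuple.monotone_sort _).strictMono_of_injective hinj (Fin.lt_def.2 hlt)

theorem exists_row_descent {W : Cell N m → Fin n} (hW : ColStrict W)
    (h : ¬IsSemistdFilling m W) : ∃ x y : Cell N m, (x.2 : ℕ) = y.2 ∧ x.1 < y.1 ∧ W y < W x := by
  by_contra! hrow
  refine h ⟨fun x y h₁ h₂ => ?_, hW⟩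
  rcases h₂.eq_or_lt with h₂ | h₂
  · rw [cell_ext h₂ h₁]
  · exact hrow x y h₁ h₂

def colWeight (W : Cell N m → Fin n) : ℤ :=
  ∑ z, ((z.1 : ℕ) : ℤ) * ((W z : ℕ) : ℤ)

theorem colWeight_comp_colPerm (W : Cell N m → Fin n) {q : Perm (Cell N m)}
    (hq : q ∈ colPermGroup N m) : colWeight (W ∘ q) = colWeight W :=
  (sum_congr rfl fun z _ => by rw [Function.comp_apply, ← hq z]).trans
    (Equiv.sum_comp q fun z => ((z.1 : ℕ) : ℤ) * ((W z : ℕ) : ℤ))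

theorem colWeight_comp (W : Cell N m → Fin n) (g : Perm (Cell N m)) :
    colWeight (W ∘ g) = ∑ z, (((g⁻¹ z).1 : ℕ) : ℤ) * ((W z : ℕ) : ℤ) := by
  rw [colWeight, ← Equiv.sum_comp g fun z => (((g⁻¹ z).1 : ℕ) : ℤ) * ((W z : ℕ) : ℤ)]
  simp

theorem colWeight_lt_comp {W : Cell N m → Fin n} {X : Finset (Cell N m)} {j₁ j₂ : Fin N}
    (hj : j₁ < j₂) (b : Fin n) (hX : ∀ z ∈ X, (z.1 = j₁ ∧ b < W z) ∨ (z.1 = j₂ ∧ W z ≤ b))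
    {g : Perm (Cell N m)} (hg : g ∈ supportedIn X) (hgc : g ∉ colPermGroup N m) :
    colWeight W < colWeight (W ∘ g) := by
  have hg' := inv_mem hg
  have hj' : (j₁ : ℕ) < j₂ := hj
  rw [colWeight_comp]
  apply sum_mul_lt_sum_perm_mul g⁻¹ ((b : ℕ) : ℤ)
  · intro z
    by_cases hz : z ∈ X
    · have hcol := hX _ (apply_mem_of_mem_supportedIn hg' hz)
      rcases hX z hz with ⟨h, hb⟩ | ⟨h, hb⟩
      · have hb' : ((b : ℕ) : ℤ) < ((W z : ℕ) : ℤ) := by exact_mod_cast hb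
        refine mul_nonneg ?_ (by linarith)
        rcases hcol with ⟨h', -⟩ | ⟨h', -⟩ <;> rw [h, h'] <;> omega
      · have hb' : ((W z : ℕ) : ℤ) ≤ ((b : ℕ) : ℤ) := by exact_mod_cast hb
        refine mul_nonneg_of_nonpos_of_nonpos ?_ (by linarith)
        rcases hcol with ⟨h', -⟩ | ⟨h', -⟩ <;> rw [h, h'] <;> omega
    · rw [apply_eq_of_mem_supportedIn hg' hz, sub_self, zero_mul]
  · intro z hlt
    have hz : z ∈ X := by
      by_contra hz
      exact hlt.ne (by rw [apply_eq_of_mem_supportedIn hg' hz])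
    rcases hX z hz with ⟨-, hb⟩ | ⟨h, -⟩
    · exact_mod_cast hb
    · rcases hX _ (apply_mem_of_mem_supportedIn hg' hz) with ⟨h', -⟩ | ⟨h', -⟩ <;>
        rw [h, h'] at hlt <;> omega
  · obtain ⟨z, hz⟩ : ∃ z, (g z).1 ≠ z.1 := by simpa [mem_fiberPerms] using hgc
    exact ⟨g z, by simpa using fun h => hz (Fin.ext (by exact_mod_cast h)).symm⟩

def garnirSet {j₁ j₂ : Fin N} (i₁ : Fin (m j₁)) (i₂ : Fin (m j₂)) : Finset (Cell N m) :=
  (Ici i₁).map (Function.Embedding.sigmaMk j₁) ∪ (Iic i₂).map (Function.Embedding.sigmaMk j₂)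

theorem of_mem_garnirSet {j₁ j₂ : Fin N} {i₁ : Fin (m j₁)} {i₂ : Fin (m j₂)} {z : Cell N m}
    (hz : z ∈ garnirSet i₁ i₂) :
    (z.1 = j₁ ∧ (i₁ : ℕ) ≤ z.2) ∨ (z.1 = j₂ ∧ (z.2 : ℕ) ≤ i₂) := by
  simp only [garnirSet, mem_union, mem_map, mem_Ici, mem_Iic,
    Function.Embedding.sigmaMk_apply] at hz
  rcases hz with ⟨i, hi, rfl⟩ | ⟨i, hi, rfl⟩
  · exact .inl ⟨rfl, hi⟩
  · exact .inr ⟨rfl, hi⟩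

theorem lt_card_garnirSet {j₁ j₂ : Fin N} (hj : j₁ ≠ j₂) (i₁ : Fin (m j₁)) (i₂ : Fin (m j₂))
    (hi : (i₁ : ℕ) = i₂) : m j₁ < #(garnirSet i₁ i₂) := by
  rw [garnirSet, card_union_of_disjoint, card_map, card_map, Fin.card_Ici, Fin.card_Iic]
  · have := i₁.isLt
    omega
  · simp only [disjoint_left, mem_map, Function.Embedding.sigmaMk_apply]
    rintro _ ⟨i, -, rfl⟩ ⟨i', -, h⟩
    exact hj (congrArg Sigma.fst h).symm

def dominance (W : Cell N m → Fin n) (t : Fin n) (r : ℕ) : ℕ :=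
  #{z | W z ≤ t ∧ (z.2 : ℕ) < r}

theorem dominance_comp_rowPerm (W : Cell N m → Fin n) {p : Perm (Cell N m)}
    (hp : p ∈ rowPermGroup N m) : dominance (W ∘ p) = dominance W := by
  funext t r
  exact card_equiv p fun z => by simp [hp z]

theorem dominance_comp_colPerm_le {W : Cell N m → Fin n} (hW : ColStrict W)
    {q : Perm (Cell N m)} (hq : q ∈ colPermGroup N m) : dominance (W ∘ q) ≤ dominance W := by
  intro t r
  simp only [dominance]
  rw [card_eq_sum_card_fiberwise (f := Sigma.fst) (t := univ) (by simp),
    card_eq_sum_card_fiberwise (f := Sigma.fst) (t := univ) (by simp)]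
  refine sum_le_sum fun j _ => ?_
  set A : Finset (Cell N m) := {z | z.1 = j ∧ W z ≤ t}
  set B : Finset (Cell N m) := {z | z.1 = j ∧ (z.2 : ℕ) < r}
  have hA : #{z | z.1 = j ∧ W (q z) ≤ t} = #A := card_equiv q fun z => by simp [A, hq z]
  have hAB : #(A ∩ B) = min #A #B := card_inter_eq_min_of_lowerClosed (fun z => (z.2 : ℕ))
    (fun a ha b hb hba => by
      simp only [A, B, mem_filter, mem_univ, true_and] at ha hb ⊢
      exact ⟨hb.1, (hW.le (hb.1.trans ha.1.symm) hba).trans ha.2⟩)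
    (fun a ha b hb hba => by
      simp only [A, B, mem_filter, mem_univ, true_and] at ha hb ⊢
      exact ⟨hb.1, hba.trans_lt ha.2⟩)
  calc #{z ∈ {z | (W ∘ q) z ≤ t ∧ (z.2 : ℕ) < r} | z.1 = j}
      ≤ min #{z | z.1 = j ∧ W (q z) ≤ t} #B := by
        refine le_min (card_le_card fun z => ?_) (card_le_card fun z => ?_) <;> simp_all [B]
    _ = #{z ∈ {z | W z ≤ t ∧ (z.2 : ℕ) < r} | z.1 = j} := by
        rw [hA, ← hAB]
        congr 1
        ext z
        simp only [A, B, mem_inter, mem_filter, mem_univ, true_and]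
        tauto

/-- In a semistandard filling the entries `≤ t` of each row fill an initial segment of it. -/
theorem le_iff_lt_card_row (hm : Antitone m) {S : Cell N m → Fin n} (hS : IsSemistdFilling m S)
    (z : Cell N m) (t : Fin n) : S z ≤ t ↔ (z.1 : ℕ) < #{w | S w ≤ t ∧ (w.2 : ℕ) = z.2} := by
  constructor
  · intro hz
    have h := card_le_card_of_surjOn (s := {w | S w ≤ t ∧ (w.2 : ℕ) = z.2})
      (t := Iic z.1) Sigma.fst fun j hj => by
        have hj' : j ≤ z.1 := mem_Iic.1 hj
        have hcell := z.2.isLt.trans_le (hm hj')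
        refine ⟨⟨j, ⟨z.2, hcell⟩⟩, ?_, rfl⟩
        simpa using (hS.1 ⟨j, ⟨z.2, hcell⟩⟩ z rfl hj').trans hz
    rw [Fin.card_Iic] at h
    omega
  · intro hlt
    by_contra! hz
    have h := card_le_card_of_injOn (s := {w | S w ≤ t ∧ (w.2 : ℕ) = z.2})
      (t := Iio z.1) Sigma.fst
      (fun w hw => by
        simp only [coe_filter, mem_univ, true_and, Set.mem_ofPred_eq] at hw
        simp only [coe_Iio, Set.mem_Iio]
        by_contra! hzw
        exact (hz.trans_le (hS.1 z w hw.2.symm hzw)).not_ge hw.1)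
      (fun w hw w' hw' h => by
        simp only [coe_filter, mem_univ, true_and, Set.mem_ofPred_eq] at hw hw'
        exact cell_ext h (hw.2.trans hw'.2.symm))
    rw [Fin.card_Iio] at h
    omega

theorem eq_of_dominance_eq (hm : Antitone m) {S S' : Cell N m → Fin n}
    (hS : IsSemistdFilling m S) (hS' : IsSemistdFilling m S')
    (h : dominance S = dominance S') : S = S' := by
  have hsplit : ∀ (W : Cell N m → Fin n) t r,
      dominance W t (r + 1) = dominance W t r + #{w | W w ≤ t ∧ (w.2 : ℕ) = r} := by
    intro W t r
    rw [dominance, dominance, ← card_union_of_disjoint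
      (disjoint_filter.2 fun w _ h₁ h₂ => by omega)]
    congr 1
    ext w
    simp only [mem_filter, mem_univ, true_and, mem_union]
    omega
  funext z
  refine eq_of_forall_ge_iff fun t => ?_
  have h₁ := hsplit S t z.2
  have h₂ := hsplit S' t z.2
  rw [h] at h₁
  rw [le_iff_lt_card_row hm hS, le_iff_lt_card_row hm hS']
  omega

/-- If `q` moved some cell, then in the highest row it moves it would increase the row sum. -/
theorem eq_one_of_comp_eq_comp {W : Cell N m → Fin n} (hW : ColStrict W)
    {q p : Perm (Cell N m)} (hq : q ∈ colPermGroup N m) (hp : p ∈ rowPermGroup N m)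
    (h : W ∘ q = W ∘ p) : q = 1 := by
  by_contra hq1
  obtain ⟨z, hz, hmin⟩ := (univ.filter fun z => q z ≠ z).exists_min_image
    (fun z => (z.2 : ℕ)) <| by
      by_contra! hfix
      exact hq1 (Equiv.ext (by simpa using hfix))
  simp only [mem_filter, mem_univ, true_and] at hz hmin
  have hup : ∀ w : Cell N m, (w.2 : ℕ) = z.2 → (z.2 : ℕ) ≤ (q w).2 := by
    intro w hw
    by_contra! hlt
    have hqw : q w ≠ w := fun he => by rw [he] at hlt; omega
    have := hmin (q w) fun he => hqw (q.injective he)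
    omega
  set R : Finset (Cell N m) := {w | (w.2 : ℕ) = z.2}
  have hle : ∀ w ∈ R, (W w : ℕ) ≤ W (q w) := fun w hw => by
    simp only [R, mem_filter, mem_univ, true_and] at hw
    exact hW.le (hq w).symm (hw ▸ hup w hw)
  have hlt : (W z : ℕ) < W (q z) := hW z (q z) (hq z).symm <|
    (hup z rfl).lt_of_ne fun he => hz (cell_ext (hq z) he.symm)
  have hsum : ∑ w ∈ R, (W (q w) : ℕ) = ∑ w ∈ R, (W w : ℕ) := by
    calc ∑ w ∈ R, (W (q w) : ℕ) = ∑ w ∈ R, (W (p w) : ℕ) := by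
          simp only [← Function.comp_apply (f := W), h]
      _ = ∑ w ∈ R, (W w : ℕ) := sum_equiv p (fun w => by simp [R, hp w]) fun _ _ => rfl
  exact (sum_lt_sum hle ⟨z, by simp [R], hlt⟩).ne' hsum

end Cells

section Tensors

variable {K V : Type} [Field K] [AddCommGroup V] [Module K V] {n : ℕ}
  (bv : Module.Basis (Fin n) K V) {N : ℕ} {m : Fin N → ℕ} {d : ℕ} (T : Fin d ≃ Cell N m)

/-- `cellBasis bv T W` is the tensor `v_{(T,W)}` of the paper. -/
def cellBasis : Module.Basis (Cell N m → Fin n) K (⨂[K] _x : Fin d, V) :=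
  (Basis.piTensorProduct fun _ => bv).reindex (T.arrowCongr (Equiv.refl (Fin n)))

theorem cellBasis_apply (W : Cell N m → Fin n) :
    cellBasis bv T W = PiTensorProduct.tprod K fun i => bv (W (T i)) := by
  simp [cellBasis, Module.Basis.reindex_apply]

theorem tpermMap_cellBasis (g : Perm (Cell N m)) (W : Cell N m → Fin n) :
    tpermMap K V d (T.symm.permCongr g) (cellBasis bv T W) = cellBasis bv T (W ∘ g) := by
  simp [tpermMap, cellBasis_apply, PiTensorProduct.reindex_tprod]

def rowSym (W : Cell N m → Fin n) : ⨂[K] _x : Fin d, V :=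
  ∑ p : rowPermGroup N m, cellBasis bv T (W ∘ p)

def symTensor (W : Cell N m → Fin n) : ⨂[K] _x : Fin d, V :=
  youngSym K V d m T (cellBasis bv T W)

theorem symTensor_eq_sum (W : Cell N m → Fin n) :
    symTensor bv T W =
      ∑ q : colPermGroup N m,
        ((Perm.sign (q : Perm (Cell N m)) : ℤ) : K) • rowSym bv T (W ∘ q) := by
  have hcol : ∀ σ, σ ∈ colPerms d m T ↔ ∀ x, (T (σ x)).1 = (T x).1 := fun σ => by
    simp [colPerms]
  have hrow : ∀ σ, σ ∈ rowPerms d m T ↔ ∀ x, ((T (σ x)).2 : ℕ) = (T x).2 := fun σ => by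
    simp [rowPerms]
  simp only [symTensor, youngSym, LinearMap.sum_apply, LinearMap.smul_apply]
  rw [sum_eq_sum_fiberPerms T Sigma.fst hcol]
  refine sum_congr rfl fun q _ => ?_
  rw [sum_eq_sum_fiberPerms T (fun z : Cell N m => (z.2 : ℕ)) hrow, rowSym, smul_sum,
    Perm.sign_permCongr]
  refine sum_congr rfl fun p _ => ?_
  rw [← permCongr_mul, tpermMap_cellBasis]
  rfl

theorem rowSym_comp_rowPerm (W : Cell N m → Fin n) {p : Perm (Cell N m)}
    (hp : p ∈ rowPermGroup N m) : rowSym bv T (W ∘ p) = rowSym bv T W :=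
  Equiv.sum_comp (Equiv.mulLeft (⟨p, hp⟩ : rowPermGroup N m)) fun p' => cellBasis bv T (W ∘ p')

theorem symTensor_comp_colPerm (W : Cell N m → Fin n) {q : Perm (Cell N m)}
    (hq : q ∈ colPermGroup N m) :
    symTensor bv T (W ∘ q) = ((Perm.sign q : ℤ) : K) • symTensor bv T W := by
  rw [symTensor_eq_sum, symTensor_eq_sum, smul_sum]
  conv_rhs => rw [← Equiv.sum_comp (Equiv.mulLeft (⟨q, hq⟩ : colPermGroup N m))]
  refine sum_congr rfl fun q' _ => ?_
  simp only [coe_mulLeft, Subgroup.coe_mul, Perm.sign_mul, Units.val_mul, Int.cast_mul,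
    smul_smul, ← mul_assoc]
  rw [← Int.cast_mul, ← Units.val_mul, Int.units_mul_self, Units.val_one, Int.cast_one, one_mul]
  rfl

theorem symTensor_eq_zero_of_col_repeat [CharZero K] {W : Cell N m → Fin n} {x y : Cell N m}
    (hxy : x ≠ y) (hcol : x.1 = y.1) (hW : W x = W y) : symTensor bv T W = 0 := by
  have hswap : W ∘ swap x y = W := by
    funext z
    simp only [Function.comp_apply, swap_apply_def]
    split_ifs <;> simp_all
  apply eq_zero_of_eq_neg (K := K)
  conv_lhs => rw [← hswap, symTensor_comp_colPerm bv T W (swap_mem_fiberPerms hcol),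
    Perm.sign_swap hxy]
  simp

/-- Garnir relation: by pigeonhole, every column permutation `q` maps two cells of one row into
`X`, and the transposition of their images makes the inner alternating sum cancel. -/
theorem garnir_relation [CharZero K] (S : Cell N m → Fin n) {X : Finset (Cell N m)} {k : ℕ}
    (hX : ∀ z ∈ X, m z.1 ≤ k) (hk : k < #X) :
    ∑ g : supportedIn X, ((Perm.sign (g : Perm (Cell N m)) : ℤ) : K) • symTensor bv T (S ∘ g)
      = 0 := by
  simp_rw [symTensor_eq_sum, smul_sum]
  rw [sum_comm]
  refine sum_eq_zero fun ⟨q, hq⟩ _ => ?_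
  obtain ⟨x₁, hx₁, x₂, hx₂, hne, hrow⟩ := exists_ne_map_eq_of_card_lt_of_maps_to
    (t := range k) (f := fun z => ((q⁻¹ z).2 : ℕ)) (by simpa using hk) fun z hz => by
      have hcol : m (q⁻¹ z).1 = m z.1 := congrArg m (inv_mem hq z)
      simpa using ((q⁻¹ z).2.isLt.trans_eq hcol).trans_le (hX z hz)
  have hconj : swap x₁ x₂ * q = q * swap (q⁻¹ x₁) (q⁻¹ x₂) := by
    have h := swap_apply_apply q (q⁻¹ x₁) (q⁻¹ x₂)
    simp only [Perm.coe_inv, apply_symm_apply] at h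
    rw [h, inv_mul_cancel_right]
    rfl
  simp_rw [smul_comm _ ((Perm.sign q : ℤ) : K)]
  rw [← smul_sum, sum_sign_smul_eq_zero_of_mul_right_invariant (supportedIn X)
    (swap_mem_supportedIn hx₁ hx₂) (Perm.sign_swap hne) (fun g => rowSym bv T ((S ∘ g) ∘ q))
    fun g => ?_, smul_zero]
  change rowSym bv T (S ∘ ⇑(g * swap x₁ x₂ * q)) = rowSym bv T (S ∘ ⇑(g * q))
  rw [mul_assoc, hconj, ← mul_assoc, Perm.coe_mul _ (swap _ _), ← Function.comp_assoc,
    rowSym_comp_rowPerm bv T _ (swap_mem_fiberPerms hrow)]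

/-- The straightening step: a row descent `S y < S x` in a column-strict filling is removed by
the Garnir relation on the cells of column `x.1` from `x` down and of column `y.1` up to `y`;
every other term of that relation has larger weight. -/
theorem symTensor_mem_of_row_descent [CharZero K] (hm : Antitone m)
    (P : Submodule K (⨂[K] _x : Fin d, V)) {S : Cell N m → Fin n} (hS : ColStrict S)
    {x y : Cell N m} (hrow : (x.2 : ℕ) = y.2) (hxy : x.1 < y.1) (hdesc : S y < S x)
    (ih : ∀ W, colWeight S < colWeight W → symTensor bv T W ∈ P) : symTensor bv T S ∈ P := by
  set X := garnirSet x.2 y.2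
  have hXval : ∀ z ∈ X, (z.1 = x.1 ∧ S y < S z) ∨ (z.1 = y.1 ∧ S z ≤ S y) := by
    intro z hz
    rcases of_mem_garnirSet hz with ⟨h₁, h₂⟩ | ⟨h₁, h₂⟩
    · exact .inl ⟨h₁, hdesc.trans_le (hS.le h₁.symm h₂)⟩
    · exact .inr ⟨h₁, hS.le h₁ h₂⟩
  have hrel := garnir_relation bv T S (k := m x.1) (X := X)
    (fun z hz => by
      rcases of_mem_garnirSet hz with ⟨h, -⟩ | ⟨h, -⟩
      · rw [h]
      · exact h ▸ hm hxy.le)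
    (lt_card_garnirSet hxy.ne x.2 y.2 hrow)
  rw [← sum_filter_add_sum_filter_not univ
    (fun g : supportedIn X => (g : Perm (Cell N m)) ∈ colPermGroup N m)] at hrel
  set H := univ.filter fun g : supportedIn X => (g : Perm (Cell N m)) ∈ colPermGroup N m
  have hH : ∑ g ∈ H, ((Perm.sign (g : Perm (Cell N m)) : ℤ) : K) • symTensor bv T (S ∘ g) =
      (#H : K) • symTensor bv T S := by
    rw [sum_congr rfl fun g hg => by
      rw [symTensor_comp_colPerm bv T S (mem_filter.1 hg).2, sign_smul_sign_smul],
      sum_const, Nat.cast_smul_eq_nsmul]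
  have hHne : (#H : K) ≠ 0 := Nat.cast_ne_zero.2 (card_ne_zero_of_mem (s := H) (a := 1)
    (mem_filter.2 ⟨mem_univ _, one_mem _⟩))
  rw [← P.smul_mem_iff hHne, ← hH, eq_neg_of_add_eq_zero_left hrel]
  refine P.neg_mem (P.sum_mem fun g hg => P.smul_mem _ (ih _ ?_))
  exact colWeight_lt_comp hxy (S y) hXval g.2 (mem_filter.1 hg).2

theorem symTensor_mem_span_semistd [CharZero K] (hm : Antitone m) (W : Cell N m → Fin n) :
    symTensor bv T W ∈ Submodule.span K
      (Set.range fun S : {S : Cell N m → Fin n // IsSemistdFilling m S} => symTensor bv T S.1) := by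
  let r := fun W W' : Cell N m → Fin n => colWeight W' < colWeight W
  have : IsTrans _ r := ⟨fun _ _ _ h₁ h₂ => h₂.trans h₁⟩
  have : Std.Irrefl r := ⟨fun _ => lt_irrefl _⟩
  induction W using (Finite.wellFounded_of_trans_of_irrefl r).induction with
  | _ W ih =>
    by_cases hinj : ∀ x y : Cell N m, x.1 = y.1 → W x = W y → x = y
    · obtain ⟨q, hq, hsorted⟩ := exists_colPerm_colStrict W hinj
      rw [← sign_smul_sign_smul (K := K) q (symTensor bv T W), ← symTensor_comp_colPerm bv T W hq]
      refine Submodule.smul_mem _ _ ?_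
      by_cases hss : IsSemistdFilling m (W ∘ q)
      · exact Submodule.subset_span ⟨⟨_, hss⟩, rfl⟩
      obtain ⟨x, y, hrow, hxy, hdesc⟩ := exists_row_descent hsorted hss
      refine symTensor_mem_of_row_descent bv T hm _ hsorted hrow hxy hdesc fun W' hW' => ih W' ?_
      rwa [colWeight_comp_colPerm W hq] at hW'
    · simp only [not_forall] at hinj
      obtain ⟨x, y, hcol, hval, hxy⟩ := hinj
      rw [symTensor_eq_zero_of_col_repeat bv T hxy hcol hval]
      exact Submodule.zero_mem _

theorem span_symTensor_semistd [CharZero K] (hm : Antitone m) :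
    Submodule.span K
        (Set.range fun S : {S : Cell N m → Fin n // IsSemistdFilling m S} => symTensor bv T S.1)
      = LinearMap.range (youngSym K V d m T) := by
  refine le_antisymm (Submodule.span_le.2 ?_) ?_
  · rintro _ ⟨S, rfl⟩
    exact ⟨_, rfl⟩
  · rw [LinearMap.range_eq_map, ← (cellBasis bv T).span_eq, Submodule.map_span,
      Submodule.span_le]
    rintro _ ⟨_, ⟨W, rfl⟩, rfl⟩
    exact symTensor_mem_span_semistd bv T hm W

theorem coord_symTensor (W W' : Cell N m → Fin n) :
    (cellBasis bv T).coord W' (symTensor bv T W) =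
      ∑ q : colPermGroup N m, ∑ p : rowPermGroup N m,
        if (W ∘ ⇑(q : Perm (Cell N m))) ∘ ⇑(p : Perm (Cell N m)) = W' then
          ((Perm.sign (q : Perm (Cell N m)) : ℤ) : K) else 0 := by
  rw [symTensor_eq_sum, map_sum]
  refine sum_congr rfl fun q _ => ?_
  rw [map_smul, rowSym, map_sum, smul_sum]
  refine sum_congr rfl fun p _ => ?_
  rw [Module.Basis.coord_apply, Module.Basis.repr_self, Finsupp.single_apply, smul_eq_mul,
    mul_ite, mul_one, mul_zero]

/-- The coefficient of `cellBasis S` in `symTensor S'` vanishes unless `S` is a row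
rearrangement of a column rearrangement of `S'`, which lowers the dominance statistic; the
diagonal coefficient counts the row permutations fixing `S`. -/
theorem linearIndependent_symTensor_semistd [CharZero K] (hm : Antitone m) :
    LinearIndependent K
      fun S : {S : Cell N m → Fin n // IsSemistdFilling m S} => symTensor bv T S.1 := by
  refine linearIndependent_of_triangular (fun S => (cellBasis bv T).coord S.1)
    (fun S => dominance S.1) (fun S S' h => Subtype.ext (eq_of_dominance_eq hm S.2 S'.2 h))
    (fun S => ?_) fun S S' h => ?_
  · rw [coord_symTensor, sum_eq_single (1 : colPermGroup N m) ?_ (by simp)]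
    · simp only [OneMemClass.coe_one, Perm.sign_one, Units.val_one, Int.cast_one]
      rw [sum_boole]
      exact Nat.cast_ne_zero.2 (card_ne_zero_of_mem (a := 1) (by simp))
    · intro q _ hq1
      refine sum_eq_zero fun p _ => if_neg fun h => hq1 (Subtype.ext ?_)
      refine eq_one_of_comp_eq_comp S.2.2 q.2 (inv_mem p.2) (funext fun z => ?_)
      simpa using congrFun h ((p : Perm (Cell N m))⁻¹ z)
  · obtain ⟨q, p, hqp⟩ : ∃ (q : colPermGroup N m) (p : rowPermGroup N m),
        (S'.1 ∘ ⇑(q : Perm (Cell N m))) ∘ ⇑(p : Perm (Cell N m)) = S.1 := by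
      by_contra! hne
      exact h (by
        rw [coord_symTensor]
        exact sum_eq_zero fun q _ => sum_eq_zero fun p _ => if_neg (hne q p))
    rw [← hqp, dominance_comp_rowPerm _ p.2]
    exact dominance_comp_colPerm_le S'.2.2 q.2

end Tensors

theorem semistandard_young_symmetrizer_basis_general
    (K V : Type) [Field K] [CharZero K]
    [AddCommGroup V] [Module K V]
    (n : ℕ) (bv : Module.Basis (Fin n) K V)
    (N : ℕ) (m : Fin N → ℕ) (hm : Antitone m)
    (d : ℕ) (T : Fin d ≃ Cell N m) :
    LinearIndependent K
      (fun S : {S : Cell N m → Fin n // IsSemistdFilling m S} =>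
        youngSym K V d m T (PiTensorProduct.tprod K fun i => bv (S.1 (T i))))
    ∧ Submodule.span K
        (Set.range fun S : {S : Cell N m → Fin n // IsSemistdFilling m S} =>
          youngSym K V d m T (PiTensorProduct.tprod K fun i => bv (S.1 (T i))))
      = LinearMap.range (youngSym K V d m T) := by
  have hfamily : (fun S : {S : Cell N m → Fin n // IsSemistdFilling m S} =>
      youngSym K V d m T (PiTensorProduct.tprod K fun i => bv (S.1 (T i)))) =
      fun S => symTensor bv T S.1 := by
    funext S
    rw [symTensor, cellBasis_apply]
  rw [hfamily]
  exact ⟨linearIndependent_symTensor_semistd bv T hm, span_symTensor_semistd bv T hm⟩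

/-- Fix a standard Young tableau `T` of shape `λ` (a partition of `d` of
length `< n = dim V`, encoded by its antitone column-length function `m = λ'`) and a basis
`v₁, …, v_n` of `V`.  The set `{c_λ^T (v_{(T,S)}) : S semistandard of shape λ with entries
in {1,…,n}}` is a basis of the Schur module `S_λ^T V = c_λ^T (V^{⊗d})`. -/
theorem semistandard_young_symmetrizer_basis
    (K V : Type) [Field K] [IsAlgClosed K] [CharZero K]
    [AddCommGroup V] [Module K V] [FiniteDimensional K V]
    (n : ℕ) (bv : Module.Basis (Fin n) K V)
    (N : ℕ) (m : Fin N → ℕ) (hm : Antitone m) (hlen : ∀ j, m j < n)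
    (d : ℕ) (T : Fin d ≃ Cell N m) (hT : IsStdTableau d m T) :
    LinearIndependent K
      (fun S : {S : Cell N m → Fin n // IsSemistdFilling m S} =>
        youngSym K V d m T (PiTensorProduct.tprod K fun i => bv (S.1 (T i))))
    ∧ Submodule.span K
        (Set.range fun S : {S : Cell N m → Fin n // IsSemistdFilling m S} =>
          youngSym K V d m T (PiTensorProduct.tprod K fun i => bv (S.1 (T i))))
      = LinearMap.range (youngSym K V d m T) :=
  semistandard_young_symmetrizer_basis_general K V n bv N m hm d T

end SchurApolarity
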